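/- arXiv:1103.0176 — 2 statements merged into one kernel-verified Lean document; each statement's English description precedes it below -/
import Mathlib

section
/- Let r ∈ (0, 1], b > 0, h ≥ 0, c > 0. If there exists a monotone wavefront profile of the Belousov–Zhabotinsky system with parameters (r, b, h, c), then c ≥ 2·√(1 − r). -/
open Real Filter Asymptotics

/-- A monotone wavefront profile of the (delayed) Belousov–Zhabotinsky system
with parameters `(r, b, h, c)`. -/
structure IsBZWavefront (r b h c : ℝ) (φ ψ : ℝ → ℝ) : Prop where
  phi_smooth : ContDiff ℝ 2 φ
  psi_smooth : ContDiff ℝ 2 ψ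
  eq_phi : ∀ t : ℝ,
    deriv (deriv φ) t - c * deriv φ t + φ t * (1 - r - φ t + r * ψ t) = 0
  eq_psi : ∀ t : ℝ,
    deriv (deriv ψ) t - c * deriv ψ t + b * φ (t - c * h) * (1 - ψ t) = 0
  phi_pos : ∀ t : ℝ, 0 < φ t
  phi_lt_one : ∀ t : ℝ, φ t < 1
  psi_pos : ∀ t : ℝ, 0 < ψ t
  psi_lt_one : ∀ t : ℝ, ψ t < 1
  dphi_pos : ∀ t : ℝ, 0 < deriv φ t
  dpsi_pos : ∀ t : ℝ, 0 < deriv ψ t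
  phi_bot : Tendsto φ atBot (nhds 0)
  psi_bot : Tendsto ψ atBot (nhds 0)
  phi_top : Tendsto φ atTop (nhds 1)
  psi_top : Tendsto ψ atTop (nhds 1)

/-! Near `-∞` the coefficient `1 - r - φ + r ψ` of the `φ`-equation tends to `1 - r`, so for
every `q < 1 - r` the profile `φ` is a positive supersolution of `φ'' - c φ' + q φ = 0` on a
half-line. If `c ^ 2 < 4 q`, this equation has the solutions `exp (c t / 2) * sin (ω (t - a))`
with `ω ^ 2 = q - c ^ 2 / 4`, which vanish at points `π / ω` apart, and Sturm comparison rules out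
a supersolution positive on such an interval. Hence `4 (1 - r) ≤ c ^ 2`. -/

open Topology

section Sturm

noncomputable def expSin (c ω a t : ℝ) : ℝ := exp (c * t / 2) * sin (ω * (t - a))

noncomputable def expSinDeriv (c ω a t : ℝ) : ℝ :=
  exp (c * t / 2) * (c / 2 * sin (ω * (t - a)) + ω * cos (ω * (t - a)))

variable {c ω a : ℝ}

lemma hasDerivAt_exp_half (t : ℝ) :
    HasDerivAt (fun t => exp (c * t / 2)) (exp (c * t / 2) * (c / 2)) t := by
  simpa using (((hasDerivAt_id t).const_mul c).div_const 2).exp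

lemma hasDerivAt_expSin (t : ℝ) : HasDerivAt (expSin c ω a) (expSinDeriv c ω a t) t := by
  have hs : HasDerivAt (fun t => sin (ω * (t - a))) (cos (ω * (t - a)) * ω) t := by
    simpa using (((hasDerivAt_id t).sub_const a).const_mul ω).sin
  exact ((hasDerivAt_exp_half t).mul hs).congr_deriv (by unfold expSinDeriv; ring)

lemma hasDerivAt_expSinDeriv (t : ℝ) :
    HasDerivAt (expSinDeriv c ω a)
      (c * expSinDeriv c ω a t - (c ^ 2 / 4 + ω ^ 2) * expSin c ω a t) t := by
  have hs : HasDerivAt (fun t => sin (ω * (t - a))) (cos (ω * (t - a)) * ω) t := by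
    simpa using (((hasDerivAt_id t).sub_const a).const_mul ω).sin
  have hc : HasDerivAt (fun t => cos (ω * (t - a))) (-sin (ω * (t - a)) * ω) t := by
    simpa using (((hasDerivAt_id t).sub_const a).const_mul ω).cos
  exact ((hasDerivAt_exp_half t).fun_mul ((hs.const_mul (c / 2)).fun_add
    (hc.const_mul ω))).congr_deriv (by unfold expSinDeriv expSin; ring)

lemma expSin_nonneg (hω : 0 < ω) {T : ℝ} (hπ : ω * (T - a) = π) {t : ℝ}
    (ht : t ∈ Set.Icc a T) : 0 ≤ expSin c ω a t := by
  refine mul_nonneg (exp_pos _).le (sin_nonneg_of_nonneg_of_le_pi ?_ ?_)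
  · exact mul_nonneg hω.le (sub_nonneg.mpr ht.1)
  · exact hπ ▸ mul_le_mul_of_nonneg_left (sub_le_sub_right ht.2 a) hω.le

/-- Sturm comparison with `expSin c ω a`, through the weighted Wronskian
`exp (-c t) * (φ * expSinDeriv - φ' * expSin)`, which is monotone on `[a, T]`. -/
theorem exp_mul_add_exp_mul_nonpos_of_supersolution (hω : 0 < ω) {T : ℝ} (hπ : ω * (T - a) = π)
    {φ φ' φ'' : ℝ → ℝ} (hφ : ∀ t, HasDerivAt φ (φ' t) t) (hφ' : ∀ t, HasDerivAt φ' (φ'' t) t)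
    (hsuper : ∀ t ∈ Set.Icc a T, φ'' t - c * φ' t + (c ^ 2 / 4 + ω ^ 2) * φ t ≤ 0) :
    exp (-(c * a / 2)) * φ a + exp (-(c * T / 2)) * φ T ≤ 0 := by
  set g : ℝ → ℝ := fun t => exp (-(c * t)) * (φ t * expSinDeriv c ω a t - φ' t * expSin c ω a t)
  have hg : ∀ t, HasDerivAt g (exp (-(c * t)) * (expSin c ω a t *
      -(φ'' t - c * φ' t + (c ^ 2 / 4 + ω ^ 2) * φ t))) t := fun t =>
    (((hasDerivAt_id t).const_mul c).fun_neg.exp.fun_mul (((hφ t).fun_mul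
      (hasDerivAt_expSinDeriv t)).fun_sub ((hφ' t).fun_mul (hasDerivAt_expSin t)))).congr_deriv
      (by simp only [id]; ring)
  have hmono : MonotoneOn g (Set.Icc a T) := by
    refine monotoneOn_of_hasDerivWithinAt_nonneg (convex_Icc a T)
      (fun t _ => (hg t).continuousAt.continuousWithinAt)
      (fun t _ => (hg t).hasDerivWithinAt) fun t ht => ?_
    rw [interior_Icc] at ht
    have := expSin_nonneg (c := c) hω hπ (Set.Ioo_subset_Icc_self ht)
    have := hsuper t (Set.Ioo_subset_Icc_self ht)
    exact mul_nonneg (exp_pos _).le (mul_nonneg ‹_› (by linarith))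
  have haT : a ≤ T := by
    by_contra! h
    nlinarith [pi_pos]
  have hweight (t : ℝ) : exp (-(c * t)) * exp (c * t / 2) = exp (-(c * t / 2)) := by
    rw [← exp_add]; ring_nf
  have hgT := hmono (Set.left_mem_Icc.mpr haT) (Set.right_mem_Icc.mpr haT) haT
  simp only [g, expSin, expSinDeriv, sub_self, mul_zero, hπ, sin_zero, cos_zero, sin_pi,
    cos_pi, zero_add, mul_one, mul_neg, sub_zero] at hgT
  have hsum : (exp (-(c * a / 2)) * φ a + exp (-(c * T / 2)) * φ T) * ω ≤ 0 := by
    rw [← hweight a, ← hweight T]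
    linear_combination hgT
  exact nonpos_of_mul_nonpos_left hsum hω

theorem le_sq_div_four_of_supersolution {q : ℝ} {φ φ' φ'' : ℝ → ℝ}
    (hφ : ∀ t, HasDerivAt φ (φ' t) t) (hφ' : ∀ t, HasDerivAt φ' (φ'' t) t)
    (hpos : ∀ᶠ t in atBot, 0 < φ t)
    (hsuper : ∀ᶠ t in atBot, φ'' t - c * φ' t + q * φ t ≤ 0) : q ≤ c ^ 2 / 4 := by
  by_contra! hq
  obtain ⟨T, hT⟩ := eventually_atBot.mp (hpos.and hsuper)
  set ω := √(q - c ^ 2 / 4)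
  have hω : 0 < ω := sqrt_pos.mpr (by linarith)
  have hqω : q = c ^ 2 / 4 + ω ^ 2 := by rw [sq_sqrt (by linarith)]; ring
  have hπ : ω * (T - (T - π / ω)) = π := by rw [sub_sub_cancel, mul_div_cancel₀ _ hω.ne']
  have hle : T - π / ω ≤ T := sub_le_self _ (div_pos pi_pos hω).le
  have key := exp_mul_add_exp_mul_nonpos_of_supersolution hω hπ hφ hφ'
    fun t ht => hqω ▸ (hT t ht.2).2
  exact key.not_gt <|
    add_pos (mul_pos (exp_pos _) (hT _ hle).1) (mul_pos (exp_pos _) (hT T le_rfl).1)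

end Sturm

namespace IsBZWavefront

variable {r b h c : ℝ} {φ ψ : ℝ → ℝ}

lemma hasDerivAt_phi (W : IsBZWavefront r b h c φ ψ) (t : ℝ) : HasDerivAt φ (deriv φ t) t :=
  (W.phi_smooth.differentiable two_ne_zero t).hasDerivAt

lemma hasDerivAt_deriv_phi (W : IsBZWavefront r b h c φ ψ) (t : ℝ) :
    HasDerivAt (deriv φ) (deriv (deriv φ) t) t :=
  ((W.phi_smooth.iterate_deriv' 1 1).differentiable one_ne_zero t).hasDerivAt

lemma eventually_phi_supersolution (W : IsBZWavefront r b h c φ ψ) {q : ℝ} (hq : q < 1 - r) :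
    ∀ᶠ t in atBot, deriv (deriv φ) t - c * deriv φ t + q * φ t ≤ 0 := by
  have hcoeff : Tendsto (fun t => 1 - r - φ t + r * ψ t) atBot (𝓝 (1 - r)) := by
    simpa using ((W.phi_bot.const_sub (1 - r)).add (W.psi_bot.const_mul r))
  filter_upwards [hcoeff.eventually_const_lt hq] with t ht
  nlinarith [W.eq_phi t, W.phi_pos t]

end IsBZWavefront

theorem bz_monostable_speed_lower_bound_general
    (r b h c : ℝ) (hc : 0 < c)
    (hex : ∃ φ ψ : ℝ → ℝ, IsBZWavefront r b h c φ ψ) :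
    2 * Real.sqrt (1 - r) ≤ c := by
  obtain ⟨φ, ψ, W⟩ := hex
  have hspeed : 1 - r ≤ c ^ 2 / 4 := le_of_forall_lt_imp_le_of_dense fun q hq =>
    le_sq_div_four_of_supersolution W.hasDerivAt_phi W.hasDerivAt_deriv_phi
      (.of_forall W.phi_pos) (W.eventually_phi_supersolution hq)
  linarith [sqrt_le_iff.mpr ⟨half_pos hc |>.le, (by linarith : 1 - r ≤ (c / 2) ^ 2)⟩]

theorem bz_monostable_speed_lower_bound
    (r b h c : ℝ) (hr0 : 0 < r) (hr1 : r ≤ 1) (hb : 0 < b) (hh : 0 ≤ h) (hc : 0 < c)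
    (hex : ∃ φ ψ : ℝ → ℝ, IsBZWavefront r b h c φ ψ) :
    2 * Real.sqrt (1 - r) ≤ c :=
  bz_monostable_speed_lower_bound_general r b h c hc hex
end

section
/- Let r > 0, b > 0, h ≥ 0 and c ∈ ℝ. Suppose φ, ψ : ℝ → ℝ are bounded twice continuously differentiable functions satisfying, for all t ∈ ℝ, φ''(t) − c·φ'(t) + φ(t)·(1 − r − φ(t) + r·ψ(t)) = 0 and ψ''(t) − c·ψ'(t) + b·φ(t − c·h)·(1 − ψ(t)) = 0, with φ(t) > 0 for all t ∈ ℝ, and with the limits φ(t), ψ(t) → 0 as t → −∞ and φ(t), ψ(t) → 1 as t → +∞. Then the profile is strictly monotone and confined between its limit values: φ'(t) > 0, ψ'(t) > 0 and 0 < φ(t) < 1, 0 < ψ(t) < 1 for all t ∈ ℝ. -/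
/-!
The integrating factor `exp (-c t)` turns each equation into
`(exp (-c t) u')' = -exp (-c t) N(t)` with a reaction term `N` of known sign, and the maximum
principle controls the extrema.

For `ψ` the forcing `q = b φ(· - c h)` is positive. The maximum principle gives `ψ ≤ 1`, so
`exp (-c t) ψ'` decreases and a negative value of `ψ'` would persist and keep `ψ` away from its
limit `1`; hence `ψ' ≥ 0`. If `ψ` touched `1`, it would do so with zero slope, and an energy
estimate for the linear equation satisfied by `1 - ψ` would force `ψ ≡ 1` on a half-line. So
`ψ < 1`, and then `exp (-c t) ψ'` decreases strictly, giving `ψ' > 0`.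

For `φ` the equation reads `φ'' - c φ' + φ (1 - φ - p) = 0` with `p = r (1 - ψ)` nonnegative and
strictly decreasing. The maximum principle gives `φ ≤ 1`. If `φ` were not monotone there would be
a local maximum `s` followed by a local minimum `u` below it, yet
`φ s ≤ 1 - p s < 1 - p u ≤ φ u`. At a zero of `φ'` one finds `φ = 1 - p`, and `p' < 0` makes
`1 - φ - p` negative just before it, so `exp (-c t) φ'` increases strictly up to `0` there,
contradicting `φ' ≥ 0`. The bounds `0 < ψ` and `φ < 1` follow from strict monotonicity.
-/

open Real Filter Asymptotics

open Set Topology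

theorem IsLocalMin.deriv_deriv_nonneg {f : ℝ → ℝ} {x : ℝ} (h : IsLocalMin f x)
    (hc : ContinuousAt f x) : 0 ≤ deriv (deriv f) x := by
  by_contra! hneg
  -- by the second derivative test `x` is also a local maximum, so `f` is constant near `x`
  have hmax : IsLocalMax f x := isLocalMax_of_deriv_deriv_neg hneg h.deriv_eq_zero hc
  have hconst : f =ᶠ[𝓝 x] fun _ => f x := (h.and hmax).mono fun y hy => le_antisymm hy.2 hy.1
  have hderiv : deriv f =ᶠ[𝓝 x] fun _ => 0 :=
    hconst.eventuallyEq_nhds.mono fun y hy => by simp [hy.deriv_eq]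
  simp [hderiv.deriv_eq] at hneg

theorem IsLocalMax.deriv_deriv_nonpos {f : ℝ → ℝ} {x : ℝ} (h : IsLocalMax f x)
    (hc : ContinuousAt f x) : deriv (deriv f) x ≤ 0 := by
  simpa using h.neg.deriv_deriv_nonneg hc.neg

theorem hasDerivAt_exp_mul_deriv {f : ℝ → ℝ} (c : ℝ) {t : ℝ}
    (hf : DifferentiableAt ℝ (deriv f) t) :
    HasDerivAt (fun s => exp (-(c * s)) * deriv f s)
      (exp (-(c * t)) * (deriv (deriv f) t - c * deriv f t)) t := by
  have hexp : HasDerivAt (fun s => exp (-(c * s))) (exp (-(c * t)) * -c) t :=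
    ((hasDerivAt_id t).const_mul c).neg.exp.congr_deriv (by simp)
  exact (hexp.mul hf.hasDerivAt).congr_deriv (by ring)

theorem exists_isMaxOn_Iic {f : ℝ → ℝ} (hf : Continuous f) {a : ℝ}
    (ha : Tendsto f atBot (𝓝 a)) {x y : ℝ} (hxy : x ≤ y) (hx : a < f x) :
    ∃ s ≤ y, IsMaxOn f (Iic y) s := by
  refine hf.continuousOn.exists_isMaxOn' (s := Iic y) isClosed_Iic (mem_Iic.2 hxy) ?_
  rw [cocompact_eq_atBot_atTop, inf_sup_right, (disjoint_atTop_principal_Iic y).eq_bot,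
    sup_bot_eq]
  exact ((ha.eventually (eventually_lt_nhds hx)).filter_mono inf_le_left).mono fun _ h => h.le

theorem exists_isMinOn_Ici {f : ℝ → ℝ} (hf : Continuous f) {b : ℝ}
    (hb : Tendsto f atTop (𝓝 b)) {x y : ℝ} (hyx : y ≤ x) (hx : f x < b) :
    ∃ s ≥ y, IsMinOn f (Ici y) s := by
  refine hf.continuousOn.exists_isMinOn' (s := Ici y) isClosed_Ici (mem_Ici.2 hyx) ?_
  rw [cocompact_eq_atBot_atTop, inf_sup_right, (disjoint_atBot_principal_Ici y).eq_bot,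
    bot_sup_eq]
  exact ((hb.eventually (eventually_gt_nhds hx)).filter_mono inf_le_left).mono fun _ h => h.le

theorem le_of_forall_isLocalMax_le {f : ℝ → ℝ} (hf : Continuous f) {a b K : ℝ}
    (ha : Tendsto f atBot (𝓝 a)) (hb : Tendsto f atTop (𝓝 b)) (haK : a ≤ K) (hbK : b ≤ K)
    (hmax : ∀ s, IsLocalMax f s → f s ≤ K) (t : ℝ) : f t ≤ K := by
  by_contra! ht
  obtain ⟨s, hs⟩ := hf.exists_forall_ge' t <| by
    rw [cocompact_eq_atBot_atTop, eventually_sup]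
    exact ⟨(ha.eventually (eventually_lt_nhds (haK.trans_lt ht))).mono fun _ h => h.le,
      (hb.eventually (eventually_lt_nhds (hbK.trans_lt ht))).mono fun _ h => h.le⟩
  exact (hmax s (IsMaxOn.isLocalMax (fun y _ => hs y) univ_mem)).not_gt (ht.trans_le (hs t))

theorem exists_isLocalMax_lt_isLocalMin {f : ℝ → ℝ} (hf : Continuous f) {a b : ℝ}
    (ha : Tendsto f atBot (𝓝 a)) (hb : Tendsto f atTop (𝓝 b)) {x y : ℝ} (hxy : x ≤ y)
    (hyx : f y < f x) (hax : a < f x) (hyb : f y < b) :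
    ∃ s t, s < t ∧ IsLocalMax f s ∧ IsLocalMin f t ∧ f t < f s := by
  obtain ⟨s, hsy, hs⟩ := exists_isMaxOn_Iic hf ha hxy hax
  have hys : f y < f s := hyx.trans_le (hs (mem_Iic.2 hxy))
  have hsy' : s < y := hsy.lt_of_ne (by rintro rfl; exact hys.false)
  obtain ⟨t, hst, ht⟩ := exists_isMinOn_Ici hf hb hsy'.le hyb
  have hts : f t < f s := (ht (mem_Ici.2 hsy'.le)).trans_lt hys
  have hst' : s < t := hst.lt_of_ne (by rintro rfl; exact hts.false)
  exact ⟨s, t, hst', hs.isLocalMax (Iic_mem_nhds hsy'), ht.isLocalMin (Ici_mem_nhds hst'), hts⟩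

theorem eq_zero_of_le_of_deriv_deriv_eq {f p q : ℝ → ℝ} {P Q t₀ : ℝ}
    (hf : Differentiable ℝ f) (hf' : Differentiable ℝ (deriv f)) (hp : ∀ t, |p t| ≤ P)
    (hq : ∀ t, |q t| ≤ Q) (hode : ∀ t, deriv (deriv f) t = p t * deriv f t + q t * f t)
    (h₀ : f t₀ = 0) (h₁ : deriv f t₀ = 0) {t : ℝ} (ht : t ≤ t₀) : f t = 0 := by
  -- chosen so that the energy `exp (K s) * (f s ^ 2 + f' s ^ 2)` is monotone; it vanishes at `t₀`
  set K := 1 + Q + 2 * P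
  have hE : ∀ s, HasDerivAt (fun s => exp (K * s) * (f s ^ 2 + deriv f s ^ 2))
      (exp (K * s) * (K * (f s ^ 2 + deriv f s ^ 2) +
        (2 * f s * deriv f s + 2 * deriv f s * deriv (deriv f) s))) s := by
    intro s
    have hexp : HasDerivAt (fun s => exp (K * s)) (exp (K * s) * K) s := by
      simpa using ((hasDerivAt_id s).const_mul K).exp
    refine (hexp.mul (((hf s).hasDerivAt.pow 2).add ((hf' s).hasDerivAt.pow 2))).congr_deriv ?_
    simp only [Pi.add_apply, Pi.pow_apply, Nat.cast_ofNat]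
    ring
  have hE' : ∀ s, 0 ≤ K * (f s ^ 2 + deriv f s ^ 2) +
      (2 * f s * deriv f s + 2 * deriv f s * deriv (deriv f) s) := by
    intro s
    rw [hode s]
    have hps := abs_le.1 (hp s)
    have hqs := abs_le.1 (hq s)
    nlinarith [sq_nonneg (f s + deriv f s), sq_nonneg (f s - deriv f s),
      mul_nonneg (sub_nonneg.2 hqs.2) (sq_nonneg (f s - deriv f s)),
      mul_nonneg (neg_le_iff_add_nonneg.1 hqs.1) (sq_nonneg (f s + deriv f s)),
      mul_nonneg (sub_nonneg.2 hps.2) (sq_nonneg (deriv f s)),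
      mul_nonneg (neg_le_iff_add_nonneg.1 hps.1) (sq_nonneg (deriv f s))]
  have hmono := monotone_of_deriv_nonneg (fun s => (hE s).differentiableAt)
    fun s => (hE s).deriv ▸ mul_nonneg (exp_pos _).le (hE' s)
  have hle := hmono ht
  simp only [h₀, h₁] at hle
  have hsq : f t ^ 2 + deriv f t ^ 2 ≤ 0 := by
    by_contra! hpos
    nlinarith [mul_pos (exp_pos (K * t)) hpos]
  exact pow_eq_zero_iff two_ne_zero |>.1 (by nlinarith [sq_nonneg (f t), sq_nonneg (deriv f t)])

namespace BZ

variable {c : ℝ} {q p p' φ ψ : ℝ → ℝ}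

theorem psi_le_one (hψ : Differentiable ℝ ψ) (hq : ∀ t, 0 < q t)
    (hode : ∀ t, deriv (deriv ψ) t - c * deriv ψ t + q t * (1 - ψ t) = 0)
    (hbot : Tendsto ψ atBot (𝓝 0)) (htop : Tendsto ψ atTop (𝓝 1)) (t : ℝ) : ψ t ≤ 1 := by
  refine le_of_forall_isLocalMax_le hψ.continuous hbot htop zero_le_one le_rfl (fun s hs => ?_) t
  by_contra! hs1
  have h := hode s
  rw [hs.deriv_eq_zero] at h
  nlinarith [hs.deriv_deriv_nonpos hψ.continuous.continuousAt, mul_pos (hq s) (sub_pos.2 hs1)]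

theorem deriv_psi_nonneg (hψ : Differentiable ℝ ψ) (hψ' : Differentiable ℝ (deriv ψ))
    (hq : ∀ t, 0 ≤ q t) (hode : ∀ t, deriv (deriv ψ) t - c * deriv ψ t + q t * (1 - ψ t) = 0)
    (hle : ∀ t, ψ t ≤ 1) (htop : Tendsto ψ atTop (𝓝 1)) (t : ℝ) : 0 ≤ deriv ψ t := by
  have hg : Antitone fun s => exp (-(c * s)) * deriv ψ s := by
    refine antitone_of_deriv_nonpos
      (fun s => (hasDerivAt_exp_mul_deriv c (hψ' s)).differentiableAt) fun s => ?_
    rw [(hasDerivAt_exp_mul_deriv c (hψ' s)).deriv,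
      show deriv (deriv ψ) s - c * deriv ψ s = -(q s * (1 - ψ s)) by linarith [hode s]]
    exact mul_nonpos_of_nonneg_of_nonpos (exp_pos _).le
      (neg_nonpos.2 (mul_nonneg (hq s) (sub_nonneg.2 (hle s))))
  by_contra! ht
  have hneg : ∀ s ∈ Ici t, deriv ψ s < 0 := fun s hs =>
    neg_of_mul_neg_right ((hg hs).trans_lt (mul_neg_of_pos_of_neg (exp_pos _) ht)) (exp_pos _).le
  have hanti : StrictAntiOn ψ (Ici t) := strictAntiOn_of_deriv_neg (convex_Ici t)
    hψ.continuous.continuousOn fun s hs => hneg s (interior_subset hs)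
  have hlim : 1 ≤ ψ (t + 1) := le_of_tendsto htop <| (eventually_ge_atTop (t + 1)).mono
    fun s hs => hanti.antitoneOn (mem_Ici.2 (by linarith)) (mem_Ici.2 (by linarith)) hs
  linarith [hanti self_mem_Ici (mem_Ici.2 (by linarith)) (lt_add_one t), hle t]

theorem psi_lt_one (hψ : Differentiable ℝ ψ) (hψ' : Differentiable ℝ (deriv ψ)) {Q : ℝ}
    (hq : ∀ t, |q t| ≤ Q) (hode : ∀ t, deriv (deriv ψ) t - c * deriv ψ t + q t * (1 - ψ t) = 0)
    (hle : ∀ t, ψ t ≤ 1) (hbot : Tendsto ψ atBot (𝓝 0)) (t : ℝ) : ψ t < 1 := by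
  refine (hle t).lt_of_ne fun ht => ?_
  have hmax : IsLocalMax ψ t := IsMaxOn.isLocalMax (fun s _ => ht ▸ hle s) univ_mem
  have hw : deriv (fun s => 1 - ψ s) = fun s => -deriv ψ s := funext fun s => deriv_const_sub 1
  have hone : ∀ s ≤ t, 1 - ψ s = 0 := fun s hs =>
    eq_zero_of_le_of_deriv_deriv_eq (p := fun _ => c) (hψ.const_sub 1) (hw ▸ hψ'.neg)
      (fun _ => le_rfl) hq (fun s => by simp only [hw, deriv.fun_neg]; linarith [hode s])
      (by simp [ht]) (by simp [hw, hmax.deriv_eq_zero]) hs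
  have hlim : Tendsto ψ atBot (𝓝 1) := tendsto_const_nhds.congr'
    ((eventually_le_atBot t).mono fun s hs => by linarith [hone s hs])
  exact zero_ne_one (tendsto_nhds_unique hbot hlim)

theorem deriv_psi_pos (hψ' : Differentiable ℝ (deriv ψ)) (hq : ∀ t, 0 < q t)
    (hode : ∀ t, deriv (deriv ψ) t - c * deriv ψ t + q t * (1 - ψ t) = 0)
    (hlt : ∀ t, ψ t < 1) (hnonneg : ∀ t, 0 ≤ deriv ψ t) (t : ℝ) : 0 < deriv ψ t := by
  have hg : StrictAnti fun s => exp (-(c * s)) * deriv ψ s := strictAnti_of_deriv_neg fun s => by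
    rw [(hasDerivAt_exp_mul_deriv c (hψ' s)).deriv,
      show deriv (deriv ψ) s - c * deriv ψ s = -(q s * (1 - ψ s)) by linarith [hode s]]
    exact mul_neg_of_pos_of_neg (exp_pos _) (neg_neg_of_pos (mul_pos (hq s) (sub_pos.2 (hlt s))))
  refine (hnonneg t).lt_of_ne fun ht => ?_
  have h := hg (lt_add_one t)
  simp only [← ht, mul_zero] at h
  nlinarith [mul_nonneg (exp_pos (-(c * (t + 1)))).le (hnonneg (t + 1))]

theorem phi_le_one (hφ : Differentiable ℝ φ) (hp : ∀ t, 0 ≤ p t)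
    (hode : ∀ t, deriv (deriv φ) t - c * deriv φ t + φ t * (1 - φ t - p t) = 0)
    (hbot : Tendsto φ atBot (𝓝 0)) (htop : Tendsto φ atTop (𝓝 1)) (t : ℝ) : φ t ≤ 1 := by
  refine le_of_forall_isLocalMax_le hφ.continuous hbot htop zero_le_one le_rfl (fun s hs => ?_) t
  by_contra! hs1
  have h := hode s
  rw [hs.deriv_eq_zero] at h
  nlinarith [hs.deriv_deriv_nonpos hφ.continuous.continuousAt,
    mul_pos (one_pos.trans hs1) (show 0 < φ s - 1 + p s by linarith [hp s])]

theorem deriv_phi_nonneg (hφ : Differentiable ℝ φ) (hpos : ∀ t, 0 < φ t) (hle : ∀ t, φ t ≤ 1)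
    (hp : StrictAnti p) (hode : ∀ t, deriv (deriv φ) t - c * deriv φ t + φ t * (1 - φ t - p t) = 0)
    (hbot : Tendsto φ atBot (𝓝 0)) (htop : Tendsto φ atTop (𝓝 1)) (t : ℝ) : 0 ≤ deriv φ t := by
  suffices hmono : Monotone φ from hmono.deriv_nonneg
  by_contra hmono
  obtain ⟨x, y, hxy, hyx⟩ : ∃ x y, x ≤ y ∧ φ y < φ x := by simpa [Monotone] using hmono
  obtain ⟨s, u, hsu, hs, hu, hus⟩ := exists_isLocalMax_lt_isLocalMin hφ.continuous hbot htop hxy hyx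
    ((hpos y).trans hyx) (hyx.trans_le (hle x))
  have hs' : 0 ≤ 1 - φ s - p s := by
    have h := hode s
    rw [hs.deriv_eq_zero] at h
    exact (mul_nonneg_iff_of_pos_left (hpos s)).1
      (by linarith [hs.deriv_deriv_nonpos hφ.continuous.continuousAt])
  have hu' : 1 - φ u - p u ≤ 0 := by
    have h := hode u
    rw [hu.deriv_eq_zero] at h
    exact (mul_nonpos_iff_pos_imp_nonpos.1
      (by linarith [hu.deriv_deriv_nonneg hφ.continuous.continuousAt])).1 (hpos u)
  linarith [hp hsu]

theorem deriv_phi_pos (hφ : Differentiable ℝ φ) (hφ' : Differentiable ℝ (deriv φ))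
    (hpos : ∀ t, 0 < φ t) (hp : ∀ t, HasDerivAt p (p' t) t) (hp' : ∀ t, p' t < 0)
    (hode : ∀ t, deriv (deriv φ) t - c * deriv φ t + φ t * (1 - φ t - p t) = 0)
    (hnonneg : ∀ t, 0 ≤ deriv φ t) (t : ℝ) : 0 < deriv φ t := by
  refine (hnonneg t).lt_of_ne fun ht => ?_
  have hmin : IsLocalMin (deriv φ) t := IsMinOn.isLocalMin (fun s _ => ht ▸ hnonneg s) univ_mem
  set F := fun s => 1 - φ s - p s
  have hF : ∀ s, HasDerivAt F (-deriv φ s - p' s) s := fun s =>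
    ((hφ s).hasDerivAt.const_sub 1).sub (hp s)
  have hFt : F t = 0 := by
    have h := hode t
    rw [hmin.deriv_eq_zero, ← ht] at h
    exact (mul_eq_zero.1 (by linarith)).resolve_left (hpos t).ne'
  have hF't : 0 < deriv F t := by rw [(hF t).deriv, ← ht]; linarith [hp' t]
  -- `F < 0` just left of `t`, where `exp (-c s) φ' s` therefore increases strictly up to `0`
  have hFneg : ∀ᶠ s in 𝓝[<] t, F s < 0 := by
    filter_upwards [nhdsWithin_le_nhds (eventually_nhdsWithin_sign_eq_of_deriv_pos hF't hFt),
      self_mem_nhdsWithin] with s hs (hst : s < t)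
    rwa [sign_neg (sub_neg.2 hst), sign_eq_neg_one_iff] at hs
  obtain ⟨l, hlt, hl⟩ := mem_nhdsLT_iff_exists_Ioo_subset.1 hFneg
  have hg : StrictMonoOn (fun s => exp (-(c * s)) * deriv φ s) (Ioc l t) := by
    refine strictMonoOn_of_deriv_pos (convex_Ioc l t) (fun s _ =>
      (hasDerivAt_exp_mul_deriv c (hφ' s)).continuousAt.continuousWithinAt) fun s hs => ?_
    rw [interior_Ioc] at hs
    rw [(hasDerivAt_exp_mul_deriv c (hφ' s)).deriv,
      show deriv (deriv φ) s - c * deriv φ s = -(φ s * F s) by linarith [hode s]]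
    exact mul_pos (exp_pos _) (neg_pos.2 (mul_neg_of_pos_of_neg (hpos s) (hl hs)))
  have hm : (l + t) / 2 ∈ Ioc l t := ⟨by linarith [mem_Iio.1 hlt], by linarith [mem_Iio.1 hlt]⟩
  have h := hg hm (right_mem_Ioc.2 hlt) (by linarith [mem_Iio.1 hlt])
  simp only [← ht, mul_zero] at h
  nlinarith [mul_nonneg (exp_pos (-(c * ((l + t) / 2)))).le (hnonneg ((l + t) / 2))]

end BZ

theorem bz_wavefronts_are_monotone_general
    (r b h c : ℝ) (hr : 0 < r) (hb : 0 < b)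
    (φ ψ : ℝ → ℝ)
    (hφ : ContDiff ℝ 2 φ) (hψ : ContDiff ℝ 2 ψ)
    (heq1 : ∀ t : ℝ,
      deriv (deriv φ) t - c * deriv φ t + φ t * (1 - r - φ t + r * ψ t) = 0)
    (heq2 : ∀ t : ℝ,
      deriv (deriv ψ) t - c * deriv ψ t + b * φ (t - c * h) * (1 - ψ t) = 0)
    (hφpos : ∀ t : ℝ, 0 < φ t)
    (hφbot : Tendsto φ atBot (nhds 0)) (hψbot : Tendsto ψ atBot (nhds 0))
    (hφtop : Tendsto φ atTop (nhds 1)) (hψtop : Tendsto ψ atTop (nhds 1)) :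
    ∀ t : ℝ, 0 < deriv φ t ∧ 0 < deriv ψ t ∧
      0 < φ t ∧ φ t < 1 ∧ 0 < ψ t ∧ ψ t < 1 := by
  have hφd := hφ.differentiable two_ne_zero
  have hψd := hψ.differentiable two_ne_zero
  have hq : ∀ t, 0 < b * φ (t - c * h) := fun t => mul_pos hb (hφpos _)
  have hode : ∀ t, deriv (deriv φ) t - c * deriv φ t + φ t * (1 - φ t - r * (1 - ψ t)) = 0 :=
    fun t => by rw [← heq1 t]; ring
  have hψle := BZ.psi_le_one hψd hq heq2 hψbot hψtop
  have hφle :=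
    BZ.phi_le_one hφd (fun t => mul_nonneg hr.le (sub_nonneg.2 (hψle t))) hode hφbot hφtop
  have hψ'nonneg :=
    BZ.deriv_psi_nonneg hψd hψ.differentiable_deriv_two (fun t => (hq t).le) heq2 hψle hψtop
  have hqb : ∀ t, |b * φ (t - c * h)| ≤ b := fun t => by
    rw [abs_of_pos (hq t)]; exact mul_le_of_le_one_right hb.le (hφle _)
  have hψlt := BZ.psi_lt_one hψd hψ.differentiable_deriv_two hqb heq2 hψle hψbot
  have hψ'pos := BZ.deriv_psi_pos hψ.differentiable_deriv_two hq heq2 hψlt hψ'nonneg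
  have hp : ∀ t, HasDerivAt (fun s => r * (1 - ψ s)) (r * -deriv ψ t) t := fun t =>
    ((hψd t).hasDerivAt.const_sub 1).const_mul r
  have hp' : ∀ t, r * -deriv ψ t < 0 := fun t =>
    mul_neg_of_pos_of_neg hr (neg_neg_of_pos (hψ'pos t))
  have hφ'pos := BZ.deriv_phi_pos hφd hφ.differentiable_deriv_two hφpos hp hp' hode
    (BZ.deriv_phi_nonneg hφd hφpos hφle (strictAnti_of_hasDerivAt_neg hp hp') hode hφbot hφtop)
  have hφmono := strictMono_of_deriv_pos hφ'pos
  have hψmono := strictMono_of_deriv_pos hψ'pos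
  exact fun t => ⟨hφ'pos t, hψ'pos t, hφpos t,
    (hφmono (lt_add_one t)).trans_le (hφmono.monotone.ge_of_tendsto hφtop _),
    (hψmono.monotone.le_of_tendsto hψbot _).trans_lt (hψmono (sub_one_lt t)), hψlt t⟩

theorem bz_wavefronts_are_monotone
    (r b h c : ℝ) (hr : 0 < r) (hb : 0 < b) (hh : 0 ≤ h)
    (φ ψ : ℝ → ℝ)
    (hφ : ContDiff ℝ 2 φ) (hψ : ContDiff ℝ 2 ψ)
    (hφbd : ∃ M : ℝ, ∀ t : ℝ, |φ t| ≤ M) (hψbd : ∃ M : ℝ, ∀ t : ℝ, |ψ t| ≤ M)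
    (heq1 : ∀ t : ℝ,
      deriv (deriv φ) t - c * deriv φ t + φ t * (1 - r - φ t + r * ψ t) = 0)
    (heq2 : ∀ t : ℝ,
      deriv (deriv ψ) t - c * deriv ψ t + b * φ (t - c * h) * (1 - ψ t) = 0)
    (hφpos : ∀ t : ℝ, 0 < φ t)
    (hφbot : Tendsto φ atBot (nhds 0)) (hψbot : Tendsto ψ atBot (nhds 0))
    (hφtop : Tendsto φ atTop (nhds 1)) (hψtop : Tendsto ψ atTop (nhds 1)) :
    ∀ t : ℝ, 0 < deriv φ t ∧ 0 < deriv ψ t ∧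
      0 < φ t ∧ φ t < 1 ∧ 0 < ψ t ∧ ψ t < 1 :=
  bz_wavefronts_are_monotone_general r b h c hr hb φ ψ hφ hψ heq1 heq2 hφpos hφbot hψbot hφtop hψtop
end
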